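/- Let u and v be non-adjacent vertices of the Farey graph. If c₁ and c₂ are two distinct vertices of the Farey graph each adjacent to both u and v, then c₁ and c₂ are adjacent to each other. Consequently, if u and v are the outer points of a quadrilateral triple (u, c₁, v), then there is exactly one other quadrilateral triple (u, c₂, v) with outer points u and v, and the two central points c₁ and c₂ are adjacent. -/

import Mathlib

/-- A Farey pair: a pair of coprime integers. -/
abbrev FareyPair : Type := {v : ℤ × ℤ // IsCoprime v.1 v.2}

/-- Identify a coprime pair of integers with its negative. -/
instance fareySetoid : Setoid FareyPair where
  r a b := a.1 = b.1 ∨ a.1 = -b.1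
  iseqv := by
    refine ⟨fun a => Or.inl rfl, ?_, ?_⟩
    · rintro a b (h | h)
      · exact Or.inl h.symm
      · exact Or.inr (by rw [h, neg_neg])
    · rintro a b c (h1 | h1) (h2 | h2)
      · exact Or.inl (h1.trans h2)
      · exact Or.inr (h1.trans h2)
      · exact Or.inr (by rw [h1, h2])
      · exact Or.inl (by rw [h1, h2, neg_neg])

/-- Vertices of the Farey graph: coprime integer pairs up to sign. -/
abbrev FareyVertex : Type := Quotient fareySetoid

/-- The Farey vertex `[p, q]` determined by a coprime pair `(p, q)`. -/
def fareyMk (p q : ℤ) (h : IsCoprime p q) : FareyVertex :=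
  Quotient.mk fareySetoid ⟨(p, q), h⟩

/-- The absolute value of the determinant, descended to Farey vertices. -/
def fareyDetAbs : FareyVertex → FareyVertex → ℤ :=
  Quotient.lift₂ (fun a b : FareyPair => |a.1.1 * b.1.2 - a.1.2 * b.1.1|)
    (by
      rintro a b a' b' (h1 | h1) (h2 | h2)
      · simp only [h1, h2]
      · simp only [h1, h2, Prod.fst_neg, Prod.snd_neg]
        apply abs_eq_abs.mpr
        right; ring
      · simp only [h1, h2, Prod.fst_neg, Prod.snd_neg]
        apply abs_eq_abs.mpr
        right; ring
      · simp only [h1, h2, Prod.fst_neg, Prod.snd_neg]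
        apply abs_eq_abs.mpr
        left; ring)

lemma fareyDetAbs_comm (u v : FareyVertex) : fareyDetAbs u v = fareyDetAbs v u := by
  refine Quotient.inductionOn₂ u v fun a b => ?_
  show |a.1.1 * b.1.2 - a.1.2 * b.1.1| = |b.1.1 * a.1.2 - b.1.2 * a.1.1|
  rw [abs_sub_comm]
  exact congrArg abs (by ring)

/-- The Farey graph: coprime integer pairs up to sign, adjacent when the
determinant is `±1`. -/
def FareyGraph : SimpleGraph FareyVertex where
  Adj u v := fareyDetAbs u v = 1
  symm := by
    constructor
    intro u v h
    show fareyDetAbs v u = 1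
    rwa [fareyDetAbs_comm]
  loopless := by
    constructor
    intro u
    refine Quotient.inductionOn u fun a => ?_
    show ¬(|a.1.1 * a.1.2 - a.1.2 * a.1.1| = 1)
    rw [show a.1.1 * a.1.2 - a.1.2 * a.1.1 = 0 from by ring]
    simp

/-- A pair of integers forming a unimodular matrix with another pair is coprime. -/
lemma coprime_of_det (a b c d : ℤ) (h : |a * d - b * c| = 1) : IsCoprime a b := by
  rcases (abs_eq (by norm_num : (0:ℤ) ≤ 1)).mp h with h' | h'
  · exact ⟨d, -c, by linear_combination h'⟩
  · exact ⟨-d, c, by linear_combination -h'⟩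


/-! For representatives, the Plücker identity
`det(u,v) det(c,c') = det(u,c) det(v,c') - det(u,c') det(v,c)` bounds the left side by `2`
whenever `c, c'` are common neighbours of `u, v`. Since `|det(u,v)| ≥ 2` for distinct
non-adjacent `u, v`, this forces `|det(u,v)| = 2` and `|det(c,c')| = 1`, and the two terms on
the right must then have opposite signs. Equivalently, the sign of `det(u,c) det(v,c)`, which
does not depend on the representative of `c`, differs for any two distinct common neighbours;
so there are at most two of them. -/

namespace Farey

def det (x y : ℤ × ℤ) : ℤ := x.1 * y.2 - x.2 * y.1

lemma det_mul_det (a b p s : ℤ × ℤ) :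
    det a b * det p s = det a p * det b s - det a s * det b p := by
  simp only [det]; ring

lemma eq_or_eq_neg_of_det_eq_zero {x y : ℤ × ℤ} (hx : IsCoprime x.1 x.2)
    (hy : IsCoprime y.1 y.2) (h : det x y = 0) : y = x ∨ y = -x := by
  unfold det at h
  obtain ⟨m, n, hmn⟩ := hx
  obtain ⟨m', n', hmn'⟩ := hy
  set t := m * y.1 + n * y.2
  have h₁ : y.1 = t * x.1 := by linear_combination (-n) * h - y.1 * hmn
  have h₂ : y.2 = t * x.2 := by linear_combination m * h - y.2 * hmn
  have ht : IsUnit t := IsUnit.of_mul_eq_one (m' * x.1 + n' * x.2) <| by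
    linear_combination hmn' - m' * h₁ - n' * h₂
  rcases Int.isUnit_iff.mp ht with ht | ht <;> rw [ht] at h₁ h₂
  · exact Or.inl (Prod.ext (by linear_combination h₁) (by linear_combination h₂))
  · exact Or.inr (Prod.ext (by simp [h₁]) (by simp [h₂]))

lemma abs_det_mul_abs_det_le_two {a b p s : ℤ × ℤ} (hap : |det a p| = 1) (hbp : |det b p| = 1)
    (has : |det a s| = 1) (hbs : |det b s| = 1) : |det a b| * |det p s| ≤ 2 := by
  rw [← abs_mul, det_mul_det]
  calc |det a p * det b s - det a s * det b p|
      ≤ |det a p * det b s| + |det a s * det b p| := abs_sub _ _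
    _ = 2 := by rw [abs_mul, abs_mul, hap, hbp, has, hbs]; norm_num

lemma det_mul_det_mul_det_mul_det_eq_neg_one {a b p s : ℤ × ℤ} (hap : |det a p| = 1)
    (hbp : |det b p| = 1) (has : |det a s| = 1) (hbs : |det b s| = 1)
    (h : |det a b| * |det p s| = 2) :
    det a p * det b p * (det a s * det b s) = -1 := by
  rw [← abs_mul, det_mul_det] at h
  have hX : |det a p * det b s| = 1 := by rw [abs_mul, hap, hbs, one_mul]
  have hY : |det a s * det b p| = 1 := by rw [abs_mul, has, hbp, one_mul]
  calc det a p * det b p * (det a s * det b s)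
      = det a p * det b s * (det a s * det b p) := by ring
    _ = -1 := by
      rcases abs_eq_abs.mp (hX.trans hY.symm) with hXY | hXY
      · rw [hXY, sub_self, abs_zero] at h; norm_num at h
      · rw [hXY, neg_mul, ← sq, ← sq_abs, hY]; norm_num

lemma not_pairwise_mul_eq_neg_one {R : Type*} [CommRing R] [LinearOrder R]
    [IsStrictOrderedRing R] (x y z : R) :
    ¬ (x * y = -1 ∧ x * z = -1 ∧ y * z = -1) := by
  rintro ⟨hxy, hxz, hyz⟩
  have : (x * y * z) ^ 2 = -1 := by
    calc (x * y * z) ^ 2 = x * y * (x * z) * (y * z) := by ring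
      _ = -1 := by rw [hxy, hxz, hyz]; norm_num
  linarith [sq_nonneg (x * y * z)]

lemma fareyDetAbs_mk (x y : FareyPair) : fareyDetAbs ⟦x⟧ ⟦y⟧ = |det x.1 y.1| := rfl

lemma adj_mk {x y : FareyPair} : FareyGraph.Adj ⟦x⟧ ⟦y⟧ ↔ |det x.1 y.1| = 1 := Iff.rfl

lemma fareyDetAbs_eq_zero_iff {u v : FareyVertex} : fareyDetAbs u v = 0 ↔ u = v := by
  induction u, v using Quotient.inductionOn₂ with
  | h x y =>
    rw [fareyDetAbs_mk, abs_eq_zero, Quotient.eq]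
    constructor
    · intro h
      rcases eq_or_eq_neg_of_det_eq_zero x.2 y.2 h with h | h
      · exact Or.inl h.symm
      · exact Or.inr (by rw [h, neg_neg])
    · rintro (h | h) <;> simp only [h, det, Prod.fst_neg, Prod.snd_neg] <;> ring

lemma fareyDetAbs_nonneg (u v : FareyVertex) : 0 ≤ fareyDetAbs u v := by
  induction u, v using Quotient.inductionOn₂
  exact abs_nonneg _

lemma two_le_fareyDetAbs {u v : FareyVertex} (hne : u ≠ v) (huv : ¬ FareyGraph.Adj u v) :
    2 ≤ fareyDetAbs u v := by
  have h₀ : fareyDetAbs u v ≠ 0 := fun h => hne (fareyDetAbs_eq_zero_iff.mp h)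
  have h₁ : fareyDetAbs u v ≠ 1 := huv
  have := fareyDetAbs_nonneg u v
  omega

variable {u v c₁ c₂ c₃ : FareyVertex}

lemma fareyDetAbs_mul_fareyDetAbs_le_two
    (h₁u : FareyGraph.Adj u c₁) (h₁v : FareyGraph.Adj v c₁) (h₂u : FareyGraph.Adj u c₂) (h₂v : FareyGraph.Adj v c₂) :
    fareyDetAbs u v * fareyDetAbs c₁ c₂ ≤ 2 := by
  induction u, v using Quotient.inductionOn₂
  induction c₁, c₂ using Quotient.inductionOn₂
  exact abs_det_mul_abs_det_le_two h₁u h₁v h₂u h₂v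

lemma fareyDetAbs_eq_two_and_adj (huv : 2 ≤ fareyDetAbs u v) (hc : c₁ ≠ c₂)
    (h₁u : FareyGraph.Adj u c₁) (h₁v : FareyGraph.Adj v c₁)
    (h₂u : FareyGraph.Adj u c₂) (h₂v : FareyGraph.Adj v c₂) :
    fareyDetAbs u v = 2 ∧ FareyGraph.Adj c₁ c₂ := by
  have hle := fareyDetAbs_mul_fareyDetAbs_le_two h₁u h₁v h₂u h₂v
  have h₀ : fareyDetAbs c₁ c₂ ≠ 0 := fun h => hc (fareyDetAbs_eq_zero_iff.mp h)
  have h₁ : 1 ≤ fareyDetAbs c₁ c₂ := by have := fareyDetAbs_nonneg c₁ c₂; omega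
  have hc₁₂ : fareyDetAbs c₁ c₂ = 1 := by nlinarith
  exact ⟨by rw [hc₁₂, mul_one] at hle; omega, hc₁₂⟩

lemma not_three_common_neighbours (huv : 2 ≤ fareyDetAbs u v)
    (h₁₂ : c₁ ≠ c₂) (h₁₃ : c₁ ≠ c₃) (h₂₃ : c₂ ≠ c₃)
    (h₁u : FareyGraph.Adj u c₁) (h₁v : FareyGraph.Adj v c₁)
    (h₂u : FareyGraph.Adj u c₂) (h₂v : FareyGraph.Adj v c₂)
    (h₃u : FareyGraph.Adj u c₃) (h₃v : FareyGraph.Adj v c₃) : False := by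
  obtain ⟨huv₂, h₁₂'⟩ := fareyDetAbs_eq_two_and_adj huv h₁₂ h₁u h₁v h₂u h₂v
  have h₁₃' := (fareyDetAbs_eq_two_and_adj huv h₁₃ h₁u h₁v h₃u h₃v).2
  have h₂₃' := (fareyDetAbs_eq_two_and_adj huv h₂₃ h₂u h₂v h₃u h₃v).2
  induction u, v using Quotient.inductionOn₂ with | h x y =>
  induction c₁, c₂ using Quotient.inductionOn₂ with | h z₁ z₂ =>
  induction c₃ using Quotient.inductionOn with | h z₃ =>
  rw [adj_mk] at *
  rw [fareyDetAbs_mk] at huv₂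
  refine not_pairwise_mul_eq_neg_one (det x.1 z₁.1 * det y.1 z₁.1)
    (det x.1 z₂.1 * det y.1 z₂.1) (det x.1 z₃.1 * det y.1 z₃.1) ⟨?_, ?_, ?_⟩
  · exact det_mul_det_mul_det_mul_det_eq_neg_one h₁u h₁v h₂u h₂v (by rw [huv₂, h₁₂']; rfl)
  · exact det_mul_det_mul_det_mul_det_eq_neg_one h₁u h₁v h₃u h₃v (by rw [huv₂, h₁₃']; rfl)
  · exact det_mul_det_mul_det_mul_det_eq_neg_one h₂u h₂v h₃u h₃v (by rw [huv₂, h₂₃']; rfl)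

end Farey

/-- If `u` and `v` are distinct non-adjacent vertices of the Farey
graph and `c₁ ≠ c₂` are both adjacent to `u` and to `v`, then `c₁` and `c₂` are
adjacent to each other; moreover `c₁` and `c₂` are the only common neighbors of `u`
and `v`, so there is exactly one quadrilateral triple with outer points `u, v` other
than `(u, c₁, v)`, namely `(u, c₂, v)`, and the two central points are adjacent. -/
theorem farey_quadrilateral_triple_central_points (u v c₁ c₂ : FareyVertex)
    (hne : u ≠ v) (huv : ¬ FareyGraph.Adj u v) (hc : c₁ ≠ c₂)
    (h₁u : FareyGraph.Adj u c₁) (h₁v : FareyGraph.Adj v c₁)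
    (h₂u : FareyGraph.Adj u c₂) (h₂v : FareyGraph.Adj v c₂) :
    FareyGraph.Adj c₁ c₂ ∧
      ∀ c : FareyVertex, FareyGraph.Adj u c → FareyGraph.Adj v c → c = c₁ ∨ c = c₂ := by
  have h₂ := Farey.two_le_fareyDetAbs hne huv
  refine ⟨(Farey.fareyDetAbs_eq_two_and_adj h₂ hc h₁u h₁v h₂u h₂v).2, fun c hcu hcv => ?_⟩
  by_contra! hc'
  exact Farey.not_three_common_neighbours h₂ hc (Ne.symm hc'.1) (Ne.symm hc'.2)
    h₁u h₁v h₂u h₂v hcu hcv
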